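/- arXiv:1203.4822 — 7 statements merged into one kernel-verified Lean document; each statement's English description precedes it below -/
import Mathlib

section
/- Two graphs are isomorphic if and only if their clique matrices are isomorphic as binary matrices (i.e., there exist a permutation of rows and a permutation of columns taking one clique matrix to the other). -/
/-- `S` is a maximal clique of `G`. -/
def IsMaxClique {V : Type*} (G : SimpleGraph V) (S : Set V) : Prop :=
  G.IsClique S ∧ ∀ T : Set V, G.IsClique T → S ⊆ T → T = S

/-!
Adjacency can be read off the clique matrix: two distinct vertices are adjacent iff some maximal
clique contains both, since by Zorn's lemma every clique (here an edge) extends to a maximal one.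
Conversely, a graph isomorphism maps maximal cliques bijectively onto maximal cliques.
-/

namespace SimpleGraph

variable {V W : Type*} {G : SimpleGraph V} {H : SimpleGraph W} {S : Set V}

theorem isMaxClique_iff_maximal : IsMaxClique G S ↔ Maximal G.IsClique S :=
  and_congr_right fun _ => forall₂_congr fun _ _ =>
    ⟨fun h hST => (h hST).le, fun h hST => (h hST).antisymm hST⟩

theorem IsClique.exists_isMaxClique_superset (hS : G.IsClique S) :
    ∃ C, S ⊆ C ∧ IsMaxClique G C := by
  obtain ⟨C, hSC, hC⟩ := zorn_subset_nonempty {T | G.IsClique T}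
    (fun c hc hchain _ => ⟨⋃₀ c, (isClique_sUnion hchain.directedOn).2 hc,
      fun _ => Set.subset_sUnion_of_mem⟩) S hS
  exact ⟨C, hSC, isMaxClique_iff_maximal.2 hC⟩

theorem adj_iff_exists_isMaxClique {u v : V} :
    G.Adj u v ↔ u ≠ v ∧ ∃ C, IsMaxClique G C ∧ u ∈ C ∧ v ∈ C := by
  refine ⟨fun h => ?_, fun ⟨hne, C, hC, hu, hv⟩ => hC.1 hu hv hne⟩
  obtain ⟨C, hpair, hC⟩ := (isClique_pair.2 fun _ => h).exists_isMaxClique_superset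
  exact ⟨h.ne, C, hC, hpair (by simp), hpair (by simp)⟩

theorem Iso.isClique_image_iff (f : G ≃g H) : H.IsClique (f '' S) ↔ G.IsClique S := by
  rw [IsClique, f.injective.injOn.pairwise_image]
  simp only [Set.Pairwise, f.map_adj_iff]

theorem Iso.isMaxClique_image_iff (f : G ≃g H) : IsMaxClique H (f '' S) ↔ IsMaxClique G S := by
  refine and_congr f.isClique_image_iff ?_
  refine (Set.image_surjective.2 f.surjective).forall.trans (forall_congr' fun T => ?_)
  simp only [f.isClique_image_iff, Set.image_subset_image_iff f.injective,
    Set.image_eq_image f.injective]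

def Iso.maxCliqueEquiv (f : G ≃g H) : {S // IsMaxClique G S} ≃ {S // IsMaxClique H S} :=
  (Equiv.Set.congr f.toEquiv).subtypeEquiv fun _ => f.isMaxClique_image_iff.symm

theorem Iso.mem_maxCliqueEquiv_iff (f : G ≃g H) (v : V) (C : {S // IsMaxClique G S}) :
    f v ∈ (f.maxCliqueEquiv C).1 ↔ v ∈ C.1 :=
  f.injective.mem_set_image

theorem map_adj_iff_of_mem_maxClique_iff (τ : V ≃ W)
    (π : {S // IsMaxClique G S} ≃ {S // IsMaxClique H S})
    (hπ : ∀ v C, v ∈ C.1 ↔ τ v ∈ (π C).1) (u v : V) :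
    H.Adj (τ u) (τ v) ↔ G.Adj u v := by
  simp only [adj_iff_exists_isMaxClique, τ.injective.ne_iff]
  refine and_congr_right fun _ => ?_
  have hcommon := π.exists_congr (q := fun C => τ u ∈ C.1 ∧ τ v ∈ C.1)
    fun C => and_congr (hπ u C) (hπ v C)
  simpa only [Subtype.exists, exists_prop] using hcommon.symm

end SimpleGraph

theorem graph_iso_iff_clique_matrix_iso_general {V V' : Type*}
    (G : SimpleGraph V) (G' : SimpleGraph V') :
    Nonempty (G ≃g G') ↔
      ∃ (τ : V ≃ V')
        (π : {S : Set V // IsMaxClique G S} ≃ {S : Set V' // IsMaxClique G' S}),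
        ∀ (v : V) (C : {S : Set V // IsMaxClique G S}),
          v ∈ C.1 ↔ τ v ∈ (π C).1 := by
  constructor
  · rintro ⟨f⟩
    exact ⟨f.toEquiv, f.maxCliqueEquiv, fun v C => (f.mem_maxCliqueEquiv_iff v C).symm⟩
  · rintro ⟨τ, π, hπ⟩
    exact ⟨⟨τ, SimpleGraph.map_adj_iff_of_mem_maxClique_iff τ π hπ _ _⟩⟩

/-- Two graphs are isomorphic if and only if their clique matrices are isomorphic
as binary matrices, i.e. there are a permutation of rows (vertices) and a
permutation of columns (maximal cliques) taking one clique matrix to the other. -/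
theorem graph_iso_iff_clique_matrix_iso {V V' : Type*} [Fintype V] [Fintype V']
    (G : SimpleGraph V) (G' : SimpleGraph V') :
    Nonempty (G ≃g G') ↔
      ∃ (τ : V ≃ V')
        (π : {S : Set V // IsMaxClique G S} ≃ {S : Set V' // IsMaxClique G' S}),
        ∀ (v : V) (C : {S : Set V // IsMaxClique G S}),
          v ∈ C.1 ↔ τ v ∈ (π C).1 :=
  graph_iso_iff_clique_matrix_iso_general G G'
end

section
/- Let V be a finite cyclically ordered set, let X be a circularly consecutive subset of V, and let R be a subset of V that is circularly consecutive with respect to the cyclic order. If X does not strongly overlap R, then R remains circularly consecutive in the cyclic order obtained from the original by reversing the order of the elements of X in place. -/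
/-- `X` and `Y` strongly overlap (in universe `V`, the whole type). -/
def StronglyOverlap {V : Type*} (X Y : Set V) : Prop :=
  (X ∩ Y).Nonempty ∧ (X \ Y).Nonempty ∧ (Y \ X).Nonempty ∧ (X ∪ Y)ᶜ.Nonempty

/-- `S` is circularly consecutive with respect to the cyclic order of `V`
given by `σ`. -/
def CircInterval {V : Type*} {n : ℕ} (σ : V ≃ Fin n) (S : Set V) : Prop :=
  ∃ a l : ℕ, S = {v | ∃ j < l, (σ v : ℕ) = (a + j) % n}



lemma zcast_sub_one {n : ℕ} (hn : 0 < n) : ((n - 1 : ℕ) : ZMod n) = -1 := by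
  rw [Nat.cast_sub hn, Nat.cast_one, ZMod.natCast_self]; ring

lemma zkey {n a b m l k j p q : ℕ} (hn : 0 < n)
    (h1 : (b + j) % n = (a + k) % n) (h2 : k + p + 1 = m) (h3 : j + q + 1 = l) :
    (a + p) % n = (2*a + m + (n-1)*(b+l) + q) % n := by
  rw [← ZMod.natCast_eq_natCast_iff']
  have h1c : ((b + j : ℕ) : ZMod n) = ((a + k : ℕ) : ZMod n) :=
    (ZMod.natCast_eq_natCast_iff' _ _ _).mpr h1
  have h2c := congrArg (Nat.cast : ℕ → ZMod n) h2
  have h3c := congrArg (Nat.cast : ℕ → ZMod n) h3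
  push_cast [zcast_sub_one hn] at h1c h2c h3c ⊢
  linear_combination h1c + h2c - h3c

lemma zkey2 {n a b m l k j' p q : ℕ} (hn : 0 < n)
    (h1 : (a + p) % n = (2*a + m + (n-1)*(b+l) + j') % n)
    (h2 : k + p + 1 = m) (h3 : q + j' + 1 = l) :
    (a + k) % n = (b + q) % n := by
  rw [← ZMod.natCast_eq_natCast_iff']
  have h1c : ((a + p : ℕ) : ZMod n) = ((2*a + m + (n-1)*(b+l) + j' : ℕ) : ZMod n) :=
    (ZMod.natCast_eq_natCast_iff' _ _ _).mpr h1
  have h2c := congrArg (Nat.cast : ℕ → ZMod n) h2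
  have h3c := congrArg (Nat.cast : ℕ → ZMod n) h3
  push_cast [zcast_sub_one hn] at h1c h2c h3c ⊢
  linear_combination -h1c + h2c - h3c

lemma mod_cancel {n b x y : ℕ} (hx : x < n) (hy : y < n)
    (h : (b + x) % n = (b + y) % n) : x = y := by
  have h2 : x ≡ y [MOD n] := Nat.ModEq.add_left_cancel' b h
  rwa [Nat.ModEq, Nat.mod_eq_of_lt hx, Nat.mod_eq_of_lt hy] at h2

lemma exists_offset {n : ℕ} (hn : 0 < n) (b r : ℕ) (hr : r < n) :
    ∃ t < n, (b + t) % n = r := by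
  refine ⟨(r + (n - b % n)) % n, Nat.mod_lt _ hn, ?_⟩
  have hbn : b % n ≤ n := (Nat.mod_lt _ hn).le
  conv_rhs => rw [← Nat.mod_eq_of_lt hr]
  rw [← ZMod.natCast_eq_natCast_iff']
  push_cast [ZMod.natCast_mod, Nat.cast_sub hbn, ZMod.natCast_self]
  ring

lemma interval_mem_pos {V : Type*} {n : ℕ} (σ : V ≃ Fin n) (S : Set V) (b l : ℕ)
    (hS : S = {v | ∃ j < l, (σ v : ℕ) = (b + j) % n}) (hn : 0 < n)
    (j : ℕ) (hj : j < l) : ∃ w ∈ S, (σ w : ℕ) = (b + j) % n := by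
  refine ⟨σ.symm ⟨(b + j) % n, Nat.mod_lt _ hn⟩, ?_, by simp⟩
  rw [hS]; exact ⟨j, hj, by simp⟩

lemma compl_interval {V : Type*} {n : ℕ} (σ : V ≃ Fin n) (hn : 0 < n) (b l : ℕ)
    (hl : l < n) :
    {v : V | ∃ j < l, (σ v : ℕ) = (b + j) % n}ᶜ
      = {v | ∃ j < n - l, (σ v : ℕ) = (b + l + j) % n} := by
  ext v
  obtain ⟨t, ht, hbt⟩ := exists_offset hn b (σ v : ℕ) (σ v).isLt
  simp only [Set.mem_compl_iff, Set.mem_setOf_eq]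
  constructor
  · intro h
    have hlt : l ≤ t := by
      by_contra hc
      exact h ⟨t, by omega, hbt.symm⟩
    refine ⟨t - l, by omega, ?_⟩
    rw [show b + l + (t - l) = b + t by omega, hbt]
  · rintro ⟨j', hj', hr'⟩ ⟨j, hj, hrj⟩
    have hmm : (b + j) % n = (b + (l + j')) % n := by
      rw [← hrj, show b + (l + j') = b + l + j' from by ring]; exact hr'
    have e1 := mod_cancel (hj.trans hl) (show l + j' < n by omega) hmm
    omega

lemma same_interval {V : Type*} {n : ℕ} (σ σ' : V ≃ Fin n) (X : Set V) (a m : ℕ)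
    (hX : X = {v | ∃ j < m, (σ v : ℕ) = (a + j) % n})
    (hout : ∀ v ∉ X, σ' v = σ v)
    (hrev : ∀ v, ∀ j < m, (σ v : ℕ) = (a + j) % n → (σ' v : ℕ) = (a + (m - 1 - j)) % n)
    (hn : 0 < n) (R : Set V) (b l : ℕ)
    (hR : R = {v | ∃ j < l, (σ v : ℕ) = (b + j) % n})
    (hcond : X ∩ R = ∅ ∨ X ⊆ R) :
    R = {v | ∃ j < l, (σ' v : ℕ) = (b + j) % n} := by
  ext v
  simp only [Set.mem_setOf_eq]
  constructor
  · intro hvR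
    obtain ⟨j, hj, hσ⟩ : ∃ j < l, (σ v : ℕ) = (b + j) % n := by rwa [hR] at hvR
    by_cases hvX : v ∈ X
    · rcases hcond with hc | hc
      · exact absurd (hc ▸ ⟨hvX, hvR⟩ : v ∈ (∅ : Set V)) (Set.notMem_empty v)
      · obtain ⟨k, hk, hσX⟩ : ∃ k < m, (σ v : ℕ) = (a + k) % n := by rwa [hX] at hvX
        have hσ' := hrev v k hk hσX
        obtain ⟨w, hwX, hw⟩ := interval_mem_pos σ X a m hX hn (m - 1 - k) (by omega)
        have hwR : w ∈ R := hc hwX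
        obtain ⟨j'', hj'', hw2⟩ : ∃ j'' < l, (σ w : ℕ) = (b + j'') % n := by rwa [hR] at hwR
        exact ⟨j'', hj'', by rw [hσ', ← hw, hw2]⟩
    · exact ⟨j, hj, by rw [hout v hvX]; exact hσ⟩
  · rintro ⟨j, hj, hσ'⟩
    by_cases hvX : v ∈ X
    · rcases hcond with hc | hc
      · obtain ⟨k, hk, hσX⟩ : ∃ k < m, (σ v : ℕ) = (a + k) % n := by rwa [hX] at hvX
        have hσ'2 := hrev v k hk hσX
        obtain ⟨w, hwX, hw⟩ := interval_mem_pos σ X a m hX hn (m - 1 - k) (by omega)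
        have hwR : w ∈ R := by rw [hR]; exact ⟨j, hj, by rw [hw, ← hσ'2, hσ']⟩
        exact absurd (hc ▸ ⟨hwX, hwR⟩ : w ∈ (∅ : Set V)) (Set.notMem_empty w)
      · exact hc hvX
    · rw [hR]; exact ⟨j, hj, by rw [← hout v hvX]; exact hσ'⟩

lemma sub_interval {V : Type*} {n : ℕ} (σ σ' : V ≃ Fin n) (X : Set V) (a m : ℕ)
    (hX : X = {v | ∃ j < m, (σ v : ℕ) = (a + j) % n})
    (hout : ∀ v ∉ X, σ' v = σ v)
    (hrev : ∀ v, ∀ j < m, (σ v : ℕ) = (a + j) % n → (σ' v : ℕ) = (a + (m - 1 - j)) % n)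
    (hn : 0 < n) (S : Set V) (b l : ℕ)
    (hS : S = {v | ∃ j < l, (σ v : ℕ) = (b + j) % n})
    (hSX : S ⊆ X) :
    ∃ c, S = {v | ∃ j < l, (σ' v : ℕ) = (c + j) % n} := by
  rcases Nat.eq_zero_or_pos l with hl | hl
  · subst hl
    refine ⟨0, ?_⟩
    rw [hS]; ext v; simp
  refine ⟨2*a + m + (n-1)*(b+l), ?_⟩
  ext v
  simp only [Set.mem_setOf_eq]
  constructor
  · intro hvS
    obtain ⟨j, hj, hσ⟩ : ∃ j < l, (σ v : ℕ) = (b + j) % n := by rwa [hS] at hvS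
    obtain ⟨k, hk, hσX⟩ : ∃ k < m, (σ v : ℕ) = (a + k) % n := by
      have := hSX hvS; rwa [hX] at this
    have hσ' := hrev v k hk hσX
    refine ⟨l - 1 - j, by omega, ?_⟩
    rw [hσ']
    exact zkey hn (hσ.symm.trans hσX) (by omega) (by omega)
  · rintro ⟨j', hj', hσ'⟩
    by_cases hvX : v ∈ X
    · obtain ⟨k, hk, hσX⟩ : ∃ k < m, (σ v : ℕ) = (a + k) % n := by rwa [hX] at hvX
      have hσ'2 := hrev v k hk hσX
      have h1 : (a + (m - 1 - k)) % n = (2*a + m + (n-1)*(b+l) + j') % n :=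
        hσ'2.symm.trans hσ'
      have h2 := zkey2 (k := k) (q := l - 1 - j') hn h1 (by omega) (by omega)
      rw [hS]
      exact ⟨l - 1 - j', by omega, hσX.trans h2⟩
    · exfalso
      have hσeq : (σ v : ℕ) = (2*a + m + (n-1)*(b+l) + j') % n := by
        rw [← hout v hvX]; exact hσ'
      obtain ⟨w, hwS, hw⟩ := interval_mem_pos σ S b l hS hn (l - 1 - j') (by omega)
      obtain ⟨k, hk, hσwX⟩ : ∃ k < m, (σ w : ℕ) = (a + k) % n := by
        have := hSX hwS; rwa [hX] at this
      have h1 := zkey (q := j') hn (hw.symm.trans hσwX) (show k + (m-1-k) + 1 = m by omega)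
        (show (l - 1 - j') + j' + 1 = l by omega)
      exact hvX (hX ▸ ⟨m - 1 - k, by omega, hσeq.trans h1.symm⟩)

/-- Let `σ` be a cyclic order of the finite set `V`, let `X` be the circularly
consecutive set occupying positions `a, a+1, …, a+m-1 (mod n)`, and let `R` be
circularly consecutive.  If `X` does not strongly overlap `R`, then `R` is
still circularly consecutive in the cyclic order `σ'` obtained from `σ` by
reversing the elements of `X` in place (the element at position `a+j` moves to
position `a+(m-1-j)`, all other elements keep their positions). -/
theorem reverse_preserves_circular_interval {V : Type*} [Fintype V] {n : ℕ}
    (σ σ' : V ≃ Fin n) (X R : Set V) (a m : ℕ)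
    (hX : X = {v | ∃ j < m, (σ v : ℕ) = (a + j) % n})
    (hR : CircInterval σ R)
    (hno : ¬ StronglyOverlap X R)
    (hout : ∀ v ∉ X, σ' v = σ v)
    (hrev : ∀ v, ∀ j < m, (σ v : ℕ) = (a + j) % n → (σ' v : ℕ) = (a + (m - 1 - j)) % n) :
    CircInterval σ' R := by
  obtain ⟨b, l, hRdef⟩ := hR
  rcases Nat.eq_zero_or_pos n with hn | hn
  · subst hn
    refine ⟨0, 0, ?_⟩
    ext v
    exact absurd (σ v).isLt (Nat.not_lt_zero _)
  simp only [StronglyOverlap, not_and_or, Set.not_nonempty_iff_eq_empty] at hno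
  rcases hno with h | h | h | h
  · exact ⟨b, l, same_interval σ σ' X a m hX hout hrev hn R b l hRdef (Or.inl h)⟩
  · exact ⟨b, l, same_interval σ σ' X a m hX hout hrev hn R b l hRdef
      (Or.inr (Set.diff_eq_empty.mp h))⟩
  · obtain ⟨c, hc⟩ := sub_interval σ σ' X a m hX hout hrev hn R b l hRdef
      (Set.diff_eq_empty.mp h)
    exact ⟨c, l, hc⟩
  · have huniv : X ∪ R = Set.univ := Set.compl_empty_iff.mp h
    rcases Nat.eq_zero_or_pos l with hl0 | hl0
    · subst hl0
      refine ⟨0, 0, ?_⟩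
      rw [hRdef]; ext v; simp
    rcases lt_or_ge l n with hl | hl
    · have hcompl : Rᶜ = {v | ∃ j < n - l, (σ v : ℕ) = (b + l + j) % n} := by
        rw [hRdef]; exact compl_interval σ hn b l hl
      have hcX : Rᶜ ⊆ X := by
        intro v hv
        rcases (huniv ▸ Set.mem_univ v : v ∈ X ∪ R) with h' | h'
        · exact h'
        · exact absurd h' hv
      obtain ⟨c, hc⟩ := sub_interval σ σ' X a m hX hout hrev hn Rᶜ (b + l) (n - l)
        hcompl hcX
      refine ⟨c + (n - l), l, ?_⟩
      have h2 := compl_interval σ' hn c (n - l) (by omega)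
      rw [← compl_compl R, hc, h2, Nat.sub_sub_self hl.le]
    · -- l ≥ n : R = univ and the target is univ too
      refine ⟨b, l, ?_⟩
      ext v
      obtain ⟨t, ht, hbt⟩ := exists_offset hn b (σ v : ℕ) (σ v).isLt
      obtain ⟨t', ht', hbt'⟩ := exists_offset hn b (σ' v : ℕ) (σ' v).isLt
      have hvR : v ∈ R := by rw [hRdef]; exact ⟨t, by omega, hbt.symm⟩
      exact iff_of_true hvR ⟨t', by omega, hbt'.symm⟩
end

section
/- Let P = {p1, …, pk} be a sequence of points on a circular-arc model. Define SD⁻(P) as the set of points p_j ∈ P that are not dominated by any earlier point p_i (i < j), and SD⁺(Q) for Q ⊆ P as the set of points q_i ∈ Q not dominated by any later point q_j of Q (in the inherited order). Then SD⁺(SD⁻(P)) is a P-dominating set: every point of P is dominated by some point of SD⁺(SD⁻(P)). -/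
/-- Point `p` dominates point `q` in the circular-arc model `A` if every arc
containing `q` also contains `p`. -/
def Dominates {ι : Type*} (A : ι → Set (AddCircle (1:ℝ)))
    (p q : AddCircle (1:ℝ)) : Prop :=
  {i | q ∈ A i} ⊆ {i | p ∈ A i}

/-- `SD⁻(P)`: indices of points not dominated by any earlier point of `P`. -/
def SDminus {ι : Type*} (A : ι → Set (AddCircle (1:ℝ))) {k : ℕ}
    (p : Fin k → AddCircle (1:ℝ)) : Set (Fin k) :=
  {j | ∀ i, i < j → ¬ Dominates A (p i) (p j)}

/-- `SD⁺(Q)`: indices in `Q` not dominated by any later point of `Q`. -/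
def SDplus {ι : Type*} (A : ι → Set (AddCircle (1:ℝ))) {k : ℕ}
    (p : Fin k → AddCircle (1:ℝ)) (Q : Set (Fin k)) : Set (Fin k) :=
  {i | i ∈ Q ∧ ∀ j ∈ Q, i < j → ¬ Dominates A (p j) (p i)}

/-! Passing to an earlier dominating point, or to a later one inside `SD⁻(P)`, can happen only
finitely often, and domination is transitive; so following such steps from any point of `P`
ends in `SD⁻(P)` and then in `SD⁺(SD⁻(P))`, at a point dominating the start. -/

theorem Dominates.refl {ι : Type*} (A : ι → Set (AddCircle (1:ℝ))) (q : AddCircle (1:ℝ)) :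
    Dominates A q q :=
  subset_rfl

theorem Dominates.trans {ι : Type*} {A : ι → Set (AddCircle (1:ℝ))} {a b c : AddCircle (1:ℝ)}
    (hab : Dominates A a b) (hbc : Dominates A b c) : Dominates A a c :=
  Set.Subset.trans hbc hab

theorem WellFounded.exists_rel_forall_not_rel {α : Type*} {lt R : α → α → Prop}
    (hwf : WellFounded lt) (hrefl : ∀ a, R a a)
    (htrans : ∀ {a b c}, R a b → R b c → R a c) (a : α) :
    ∃ b, R b a ∧ ∀ c, lt c b → ¬ R c b := by
  induction a using hwf.induction with
  | _ a ih =>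
    by_cases ha : ∀ c, lt c a → ¬ R c a
    · exact ⟨a, hrefl a, ha⟩
    · push Not at ha
      obtain ⟨c, hca, hRca⟩ := ha
      obtain ⟨b, hRbc, hb⟩ := ih c hca
      exact ⟨b, htrans hRbc hRca, hb⟩

section

variable {ι : Type*} (A : ι → Set (AddCircle (1:ℝ))) {k : ℕ} (p : Fin k → AddCircle (1:ℝ))

theorem exists_mem_SDminus_dominates (j : Fin k) :
    ∃ i ∈ SDminus A p, Dominates A (p i) (p j) := by
  obtain ⟨i, hij, hi⟩ := wellFounded_lt.exists_rel_forall_not_rel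
    (R := fun i j : Fin k => Dominates A (p i) (p j)) (fun _ => Dominates.refl A _)
    Dominates.trans j
  exact ⟨i, hi, hij⟩

theorem exists_mem_SDplus_dominates {Q : Set (Fin k)} {i : Fin k} (hi : i ∈ Q) :
    ∃ m ∈ SDplus A p Q, Dominates A (p m) (p i) := by
  obtain ⟨⟨m, hmQ⟩, hmi, hm⟩ := (wellFounded_gt (α := ↥Q)).exists_rel_forall_not_rel
    (R := fun a b : ↥Q => Dominates A (p a) (p b)) (fun _ => Dominates.refl A _)
    Dominates.trans ⟨i, hi⟩
  exact ⟨m, ⟨hmQ, fun j hjQ hmj => hm ⟨j, hjQ⟩ hmj⟩, hmi⟩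

end

theorem SDplus_SDminus_dominating_general {ι : Type*}
    (A : ι → Set (AddCircle (1:ℝ))) {k : ℕ} (p : Fin k → AddCircle (1:ℝ)) :
    ∀ j : Fin k, ∃ i ∈ SDplus A p (SDminus A p), Dominates A (p i) (p j) := by
  intro j
  obtain ⟨i, hi, hij⟩ := exists_mem_SDminus_dominates A p j
  obtain ⟨m, hm, hmi⟩ := exists_mem_SDplus_dominates A p hi
  exact ⟨m, hm, hmi.trans hij⟩

/-- `SD⁺(SD⁻(P))` is a `P`-dominating set: every point of `P` is dominated by
some point of `SD⁺(SD⁻(P))`. -/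
theorem SDplus_SDminus_dominating {ι : Type*} [Fintype ι]
    (A : ι → Set (AddCircle (1:ℝ))) {k : ℕ} (p : Fin k → AddCircle (1:ℝ)) :
    ∀ j : Fin k, ∃ i ∈ SDplus A p (SDminus A p), Dominates A (p i) (p j) :=
  SDplus_SDminus_dominating_general A p
end

section
/- With the notation of the semi-dominating sequences: SD⁺(SD⁻(P)) is a minimal P-dominating set — no point of SD⁺(SD⁻(P)) dominates any other point of SD⁺(SD⁻(P)), so no proper subset of it is P-dominating. -/
/-- `P' ⊆ P` is `P`-dominating: every point of `P` outside `P'` is dominated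
by some point of `P'`. -/
def PDominating {ι : Type*} (A : ι → Set (AddCircle (1:ℝ))) {k : ℕ}
    (p : Fin k → AddCircle (1:ℝ)) (P' : Set (Fin k)) : Prop :=
  ∀ j : Fin k, j ∉ P' → ∃ i ∈ P', Dominates A (p i) (p j)

section

variable {ι : Type*} {A : ι → Set (AddCircle (1:ℝ))} {k : ℕ} {p : Fin k → AddCircle (1:ℝ)}

theorem not_dominates_of_mem_SDplus {Q : Set (Fin k)} (hQ : Q ⊆ SDminus A p) {i j : Fin k}
    (hi : i ∈ SDplus A p Q) (hj : j ∈ Q) (hne : j ≠ i) : ¬ Dominates A (p j) (p i) := by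
  rcases hne.lt_or_gt with hji | hij
  · exact hQ hi.1 j hji
  · exact hi.2 j hj hij

theorem not_pDominating_of_ssubset {S P' : Set (Fin k)}
    (hS : ∀ i ∈ S, ∀ j ∈ S, j ≠ i → ¬ Dominates A (p j) (p i)) (hP' : P' ⊂ S) :
    ¬ PDominating A p P' := by
  intro hdom
  obtain ⟨i, hiS, hiP'⟩ := Set.exists_of_ssubset hP'
  obtain ⟨j, hjP', hji⟩ := hdom i hiP'
  exact hS i hiS j (hP'.subset hjP') (ne_of_mem_of_not_mem hjP' hiP') hji

end

theorem SDplus_SDminus_minimal_general {ι : Type*}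
    (A : ι → Set (AddCircle (1:ℝ))) {k : ℕ} (p : Fin k → AddCircle (1:ℝ)) :
    (∀ i ∈ SDplus A p (SDminus A p), ∀ j ∈ SDplus A p (SDminus A p),
      j ≠ i → Dominates A (p j) (p i) → False) ∧
    (∀ P' ⊆ SDplus A p (SDminus A p), P' ≠ SDplus A p (SDminus A p) →
      ¬ PDominating A p P') := by
  have hanti : ∀ i ∈ SDplus A p (SDminus A p), ∀ j ∈ SDplus A p (SDminus A p),
      j ≠ i → ¬ Dominates A (p j) (p i) := fun i hi j hj =>
    not_dominates_of_mem_SDplus subset_rfl hi hj.1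
  exact ⟨hanti, fun P' hsub hne =>
    not_pDominating_of_ssubset hanti (Set.ssubset_iff_subset_ne.2 ⟨hsub, hne⟩)⟩

/-- `SD⁺(SD⁻(P))` is a minimal `P`-dominating set: no point of it dominates
any other point of it, and hence no proper subset of it is `P`-dominating. -/
theorem SDplus_SDminus_minimal {ι : Type*} [Fintype ι]
    (A : ι → Set (AddCircle (1:ℝ))) {k : ℕ} (p : Fin k → AddCircle (1:ℝ)) :
    (∀ i ∈ SDplus A p (SDminus A p), ∀ j ∈ SDplus A p (SDminus A p),
      j ≠ i → Dominates A (p j) (p i) → False) ∧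
    (∀ P' ⊆ SDplus A p (SDminus A p), P' ≠ SDplus A p (SDminus A p) →
      ¬ PDominating A p P') :=
  SDplus_SDminus_minimal_general A p
end

section
/- In a Helly circular-arc model, every maximal clique of the intersection graph equals the set of arcs containing some point of the circle. -/
/-- `S` is an arc of the circle `ℝ/ℤ`. -/
def IsArc (S : Set (AddCircle (1:ℝ))) : Prop :=
  ∃ s l : ℝ, 0 ≤ l ∧ l < 1 ∧
    S = {x | ∃ t : ℝ, 0 ≤ t ∧ t ≤ l ∧ x = (↑s : AddCircle (1:ℝ)) + ↑t}

/-- The intersection graph of a family of arcs: one vertex per arc, two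
distinct vertices adjacent iff the arcs intersect. -/
def interGraph {ι : Type*} (A : ι → Set (AddCircle (1:ℝ))) : SimpleGraph ι where
  Adj i j := i ≠ j ∧ (A i ∩ A j).Nonempty
  symm := by
    constructor
    intro i j h
    exact ⟨h.1.symm, by rw [Set.inter_comm]; exact h.2⟩
  loopless := by
    constructor
    intro i h
    exact h.1 rfl

theorem IsArc.nonempty {S : Set (AddCircle (1:ℝ))} (h : IsArc S) : S.Nonempty := by
  obtain ⟨s, l, hl0, -, rfl⟩ := h
  exact ⟨s, 0, le_rfl, hl0, by simp⟩

section interGraph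

variable {ι : Type*} (A : ι → Set (AddCircle (1:ℝ)))

theorem isClique_interGraph_setOf_mem (p : AddCircle (1:ℝ)) :
    (interGraph A).IsClique {i | p ∈ A i} :=
  fun _ hi _ hj hij => ⟨hij, p, hi, hj⟩

variable {A}

/-- Vertices of the intersection graph carry no loops, so the diagonal needs `A i ≠ ∅`. -/
theorem SimpleGraph.IsClique.inter_nonempty_of_interGraph {S : Set ι}
    (hS : (interGraph A).IsClique S) (hne : ∀ i, (A i).Nonempty) :
    ∀ i ∈ S, ∀ j ∈ S, (A i ∩ A j).Nonempty := by
  intro i hi j hj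
  obtain rfl | hij := eq_or_ne i j
  · simpa only [Set.inter_self] using hne i
  · exact (hS hi hj hij).2

end interGraph

theorem maxClique_eq_arcs_through_point_general {ι : Type*}
    (A : ι → Set (AddCircle (1:ℝ))) (harc : ∀ i, IsArc (A i))
    (hHelly : ∀ s : Set ι, (∀ i ∈ s, ∀ j ∈ s, (A i ∩ A j).Nonempty) →
      ∃ p, ∀ i ∈ s, p ∈ A i)
    (S : Set ι) (hS : IsMaxClique (interGraph A) S) :
    ∃ p : AddCircle (1:ℝ), S = {i | p ∈ A i} := by
  obtain ⟨hclique, hmax⟩ := hS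
  obtain ⟨p, hp⟩ := hHelly S (hclique.inter_nonempty_of_interGraph fun i => (harc i).nonempty)
  exact ⟨p, (hmax _ (isClique_interGraph_setOf_mem A p) hp).symm⟩

/-- In a Helly circular-arc model, every maximal clique of the intersection
graph equals the set of arcs containing some point of the circle. -/
theorem maxClique_eq_arcs_through_point {ι : Type*} [Fintype ι]
    (A : ι → Set (AddCircle (1:ℝ))) (harc : ∀ i, IsArc (A i))
    (hHelly : ∀ s : Set ι, (∀ i ∈ s, ∀ j ∈ s, (A i ∩ A j).Nonempty) →
      ∃ p, ∀ i ∈ s, p ∈ A i)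
    (S : Set ι) (hS : IsMaxClique (interGraph A) S) :
    ∃ p : AddCircle (1:ℝ), S = {i | p ∈ A i} :=
  maxClique_eq_arcs_through_point_general A harc hHelly S hS
end

section
/- If M is a circular-ones matrix with a circular-ones cyclic ordering of its columns, c is a column, and M' is obtained by complementing every row of M that has a 1 in column c and then deleting column c, then the induced linear ordering of the remaining columns (cutting the cyclic order at c) is a consecutive-ones ordering of M'. -/
/-! Each row of a circular-ones matrix occupies an arc of the cycle of column positions.
Complementing the rows that have a 1 in column `c` replaces their arc by the complementary arc,
so afterwards no row's arc contains `c`. Cutting the cycle at `c`, i.e. rotating the positions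
so that `c` comes last, turns every arc avoiding `c` into an ordinary interval. -/

/-- `σ` is a circular-ones ordering of the columns of `M`. -/
def IsCircularOnesOrdering {ρ γ : Type*} {n : ℕ} (σ : γ ≃ Fin n) (M : ρ → γ → Prop) : Prop :=
  ∀ r, ∃ a l : ℕ, ∀ c, M r c ↔ ∃ j < l, (σ c : ℕ) = (a + j) % n

def cyclicArc (n a l : ℕ) : Set ℕ := {v | ∃ j < l, v = (a + j) % n}

section CyclicArc

variable {n a l v : ℕ}

theorem mem_cyclicArc_of_le (hv : v < n) (hl : n ≤ l) : v ∈ cyclicArc n a l := by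
  have : NeZero n := ⟨by omega⟩
  refine ⟨((v : ZMod n) - a).val, (ZMod.val_lt _).trans_le hl, ?_⟩
  rw [← ZMod.val_natCast n (a + _), Nat.cast_add, ZMod.natCast_zmod_val, add_sub_cancel,
    ZMod.val_natCast, Nat.mod_eq_of_lt hv]

theorem mem_cyclicArc_min_iff (hv : v < n) :
    v ∈ cyclicArc n a (min l n) ↔ v ∈ cyclicArc n a l := by
  refine ⟨fun ⟨j, hj, hvj⟩ => ⟨j, lt_of_lt_of_le hj (min_le_left _ _), hvj⟩, fun h => ?_⟩
  rcases le_total l n with hln | hnl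
  · rwa [min_eq_left hln]
  · exact mem_cyclicArc_of_le hv (by omega)

theorem eq_of_add_mod_eq_add_mod {i j : ℕ} (hi : i < n) (hj : j < n)
    (h : (a + i) % n = (a + j) % n) : i = j :=
  Nat.ModEq.eq_of_lt_of_lt (Nat.ModEq.add_left_cancel' a h) hi hj

theorem notMem_cyclicArc_iff (hl : l ≤ n) (hv : v < n) :
    v ∉ cyclicArc n a l ↔ v ∈ cyclicArc n (a + l) (n - l) := by
  constructor
  · intro h
    obtain ⟨j, hj, rfl⟩ := mem_cyclicArc_of_le (a := a) hv le_rfl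
    have hlj : l ≤ j := not_lt.mp fun hjl => h ⟨j, hjl, rfl⟩
    exact ⟨j - l, by omega, by rw [add_assoc, Nat.add_sub_cancel' hlj]⟩
  · rintro ⟨j, hj, rfl⟩ ⟨i, hi, h⟩
    rw [add_assoc] at h
    have := eq_of_add_mod_eq_add_mod (by omega) (by omega) h
    omega

theorem add_mod_mem_cyclicArc_add_iff (t : ℕ) (hv : v < n) :
    (v + t) % n ∈ cyclicArc n (a + t) l ↔ v ∈ cyclicArc n a l := by
  refine exists_congr fun j => and_congr_right fun _ => ?_
  have hcancel : (v + t) % n = (a + j + t) % n ↔ v % n = (a + j) % n :=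
    ⟨Nat.ModEq.add_right_cancel' t, Nat.ModEq.add_right t⟩
  rw [show a + t + j = a + j + t by ring, hcancel, Nat.mod_eq_of_lt hv]

theorem cyclicArc_mod_left : cyclicArc n (a % n) l = cyclicArc n a l := by
  ext v
  simp only [cyclicArc, Set.mem_ofPred_eq, Nat.mod_add_mod]

theorem mem_cyclicArc_iff_of_notMem (ha : a < n)
    (hlast : n - 1 ∉ cyclicArc n a l) : v ∈ cyclicArc n a l ↔ a ≤ v ∧ v < a + l := by
  have hal : a + l ≤ n := by
    by_contra! h
    exact hlast ⟨n - 1 - a, by omega, by rw [Nat.mod_eq_of_lt (by omega)]; omega⟩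
  constructor
  · rintro ⟨j, hj, rfl⟩
    rw [Nat.mod_eq_of_lt (by omega)]
    omega
  · rintro ⟨hav, hvl⟩
    exact ⟨v - a, by omega, by rw [Nat.mod_eq_of_lt (by omega)]; omega⟩

/-- Rotating by `n - 1 - k` moves the cut point `k` to the last position. -/
theorem exists_interval_of_notMem_cyclicArc {k : ℕ} (hk : k < n) (hkl : k ∉ cyclicArc n a l) :
    ∃ b, ∀ v < n, v ∈ cyclicArc n a l ↔
      b ≤ (v + (n - 1) - k) % n ∧ (v + (n - 1) - k) % n < b + l := by
  set t := n - 1 - k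
  have hshift : ∀ v, v + (n - 1) - k = v + t := fun v => by omega
  have hlast : n - 1 ∉ cyclicArc n ((a + t) % n) l := by
    rwa [cyclicArc_mod_left, show n - 1 = (k + t) % n by rw [Nat.mod_eq_of_lt (by omega)]; omega,
      add_mod_mem_cyclicArc_add_iff t hk]
  refine ⟨(a + t) % n, fun v hv => ?_⟩
  rw [hshift, ← mem_cyclicArc_iff_of_notMem (Nat.mod_lt _ (by omega)) hlast, cyclicArc_mod_left,
    add_mod_mem_cyclicArc_add_iff t hv]

end CyclicArc

theorem exists_xor_iff_mem_cyclicArc {γ : Type*} {n a l : ℕ} {P : γ → Prop} (f : γ → Fin n)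
    (hP : ∀ x, P x ↔ (f x : ℕ) ∈ cyclicArc n a l) (c : γ) :
    ∃ b m, ∀ x, Xor (P x) (P c) ↔ (f x : ℕ) ∈ cyclicArc n b m := by
  by_cases hc : P c
  · refine ⟨a + min l n, n - min l n, fun x => ?_⟩
    rw [eq_true hc, xor_comm, xor_true, hP, ← notMem_cyclicArc_iff (min_le_right l n) (f x).isLt,
      mem_cyclicArc_min_iff (f x).isLt]
  · exact ⟨a, l, fun x => by rw [eq_false hc, xor_comm, xor_false, id, hP]⟩

/-- Let `M` be a circular-ones matrix with circular-ones ordering `σ`, and let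
`c` be a column.  Form `M'` by complementing every row of `M` that has a 1 in
column `c` and deleting column `c` (so the entry of `M'` at `(r, x)` is
`Xor' (M r x) (M r c)`).  Then the linear ordering of the remaining columns
obtained by cutting the cyclic order just after `c` — position
`((σ x) + (n-1) - (σ c)) % n` — is a consecutive-ones ordering of `M'`. -/
theorem complement_and_cut_consecutiveOnes {ρ γ : Type*} {n : ℕ}
    (σ : γ ≃ Fin n) (M : ρ → γ → Prop) (hM : IsCircularOnesOrdering σ M) (c : γ) :
    ∀ r, ∃ a l : ℕ, ∀ x : {y : γ // y ≠ c},
      Xor' (M r x.1) (M r c) ↔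
        (a ≤ ((σ x.1 : ℕ) + (n - 1) - (σ c : ℕ)) % n ∧
          ((σ x.1 : ℕ) + (n - 1) - (σ c : ℕ)) % n < a + l) := by
  intro r
  obtain ⟨a, l, hrow⟩ := hM r
  obtain ⟨b, m, hxor⟩ := exists_xor_iff_mem_cyclicArc σ hrow c
  have hc : (σ c : ℕ) ∉ cyclicArc n b m := fun h => by simpa using (hxor c).mpr h
  obtain ⟨b', hb'⟩ := exists_interval_of_notMem_cyclicArc (σ c).isLt hc
  exact ⟨b', m, fun x => (hxor x).trans (hb' _ (σ x).isLt)⟩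
end

section
/- In a proper circular-arc model in which no two arcs together cover the whole circle, indexing the vertices by the clockwise order of the counterclockwise endpoints of their arcs yields a circular-ones ordering of the augmented adjacency matrix of the intersection graph. -/
private lemma downClosed_eq_range (u : Finset ℕ)
    (h : ∀ p ∈ u, ∀ q, q ≤ p → q ∈ u) : u = Finset.range u.card := by
  classical
  have h1 : ∀ p ∈ u, p < u.card := by
    intro p hp
    have hsub : Finset.range (p + 1) ⊆ u := by
      intro q hq
      exact h p hp q (Nat.lt_succ_iff.mp (Finset.mem_range.mp hq))
    have := Finset.card_le_card hsub
    simpa using this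
  ext q
  simp only [Finset.mem_range]
  constructor
  · exact h1 q
  · intro hq
    by_contra hqu
    have hsub : u ⊆ Finset.range q := by
      intro p hp
      rw [Finset.mem_range]
      by_contra hpq
      exact hqu (h p hp q (Nat.le_of_not_lt hpq))
    have := Finset.card_le_card hsub
    simp at this
    omega

private lemma coe_eq_coe_addCircle (x y : ℝ) :
    ((x : AddCircle (1:ℝ)) = (y : AddCircle (1:ℝ))) ↔ ∃ m : ℤ, x - y = m := by
  constructor
  · intro h
    have := QuotientAddGroup.eq.mp h
    rw [AddSubgroup.mem_zmultiples_iff] at this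
    obtain ⟨k, hk⟩ := this
    refine ⟨-k, ?_⟩
    push_cast
    simp only [zsmul_eq_mul, mul_one] at hk
    linarith
  · rintro ⟨m, hm⟩
    refine QuotientAddGroup.eq.mpr ?_
    rw [AddSubgroup.mem_zmultiples_iff]
    refine ⟨-m, ?_⟩
    simp only [zsmul_eq_mul, mul_one]
    push_cast
    linarith

private lemma key_interval (dd li lj : ℝ) (h0 : 0 ≤ dd) (h1 : dd < 1)
    (h2 : 0 < li) (h3 : li < 1) (h4 : 0 < lj) (h5 : lj < 1) :
    (∃ m : ℤ, -lj ≤ dd + m ∧ dd + m ≤ li) ↔ (dd ≤ li ∨ 1 - dd ≤ lj) := by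
  constructor
  · rintro ⟨m, hm1, hm2⟩
    have hma : (m : ℝ) < 1 := by linarith
    have hmb : (-2 : ℝ) < m := by linarith
    have hma' : m < 1 := by exact_mod_cast hma
    have hmb' : (-2 : ℤ) < m := by exact_mod_cast hmb
    rcases (by omega : m = 0 ∨ m = -1) with rfl | rfl
    · left; push_cast at hm2; linarith
    · right; push_cast at hm1; linarith
  · rintro (h | h)
    · exact ⟨0, by push_cast; constructor <;> linarith⟩
    · exact ⟨-1, by push_cast; constructor <;> linarith⟩

/-- In a proper circular-arc model in which no two arcs together cover the
whole circle, indexing the vertices by the cyclic order of the endpoints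
`s i` of their arcs (the counterclockwise endpoints, taking increasing angle
as the clockwise direction) yields a circular-ones ordering of the augmented
adjacency matrix of the intersection graph. -/
theorem proper_model_augmented_adjacency_circularOnes {n : ℕ}
    (s l : Fin n → ℝ)
    (hs0 : ∀ i, 0 ≤ s i) (hs1 : ∀ i, s i < 1)
    (hmono : ∀ i j : Fin n, i < j → s i < s j)
    (hl : ∀ i, 0 < l i ∧ l i < 1)
    (A : Fin n → Set (AddCircle (1:ℝ)))
    (hA : ∀ i, A i = {x | ∃ t : ℝ, 0 ≤ t ∧ t ≤ l i ∧ x = (↑(s i) : AddCircle (1:ℝ)) + ↑t})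
    (hproper : ∀ i j, i ≠ j → ¬ A i ⊆ A j)
    (hcover : ∀ i j, A i ∪ A j ≠ Set.univ) :
    ∀ i : Fin n, ∃ a len : ℕ, ∀ j : Fin n,
      (i = j ∨ (A i ∩ A j).Nonempty) ↔ ∃ k < len, (j : ℕ) = (a + k) % n := by
  classical
  intro i
  have hn : 0 < n := i.pos
  -- membership in an arc, in terms of real representatives
  have hmemA : ∀ (j : Fin n) (x : ℝ), ((x : AddCircle (1:ℝ)) ∈ A j) ↔
      ∃ t : ℝ, 0 ≤ t ∧ t ≤ l j ∧ ∃ m : ℤ, x - (s j + t) = m := by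
    intro j x
    rw [hA j]
    simp only [Set.mem_setOf_eq]
    constructor
    · rintro ⟨t, h0, h1, hx⟩
      refine ⟨t, h0, h1, (coe_eq_coe_addCircle x (s j + t)).mp ?_⟩
      rw [hx]; rfl
    · rintro ⟨t, h0, h1, m, hm⟩
      refine ⟨t, h0, h1, ?_⟩
      have := (coe_eq_coe_addCircle x (s j + t)).mpr ⟨m, hm⟩
      rw [this]; rfl
  -- the cyclic distance from s i to s j
  set D : Fin n → ℝ := fun j => if (i:ℕ) ≤ (j:ℕ) then s j - s i else s j - s i + 1 with hDdef
  set pos : Fin n → ℕ := fun j => if (i:ℕ) ≤ (j:ℕ) then (j:ℕ) - (i:ℕ) else (j:ℕ) + (n - (i:ℕ))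
    with hposdef
  have hsval : ∀ j k : Fin n, (j:ℕ) < (k:ℕ) → s j < s k := by
    intro j k h; exact hmono j k h
  have hDi : D i = 0 := by simp [hDdef]
  have hDnn : ∀ j, 0 ≤ D j := by
    intro j
    simp only [hDdef]
    split_ifs with h
    · rcases Nat.eq_or_lt_of_le h with h' | h'
      · have : i = j := Fin.ext h'.symm ▸ rfl
        · rw [Fin.ext h'] ; ring_nf ; simp
      · have := hsval i j h'; linarith
    · have := hs1 i; have := hs0 j; linarith
  have hDlt : ∀ j, D j < 1 := by
    intro j
    simp only [hDdef]
    split_ifs with h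
    · have := hs1 j; have := hs0 i; linarith
    · have := hsval j i (Nat.lt_of_not_le h); linarith
  have hDpos : ∀ j, j ≠ i → 0 < D j := by
    intro j hj
    simp only [hDdef]
    split_ifs with h
    · have h' : (i:ℕ) < (j:ℕ) := by
        rcases Nat.eq_or_lt_of_le h with h' | h'
        · exact absurd (Fin.ext h'.symm) hj
        · exact h'
      have := hsval i j h'; linarith
    · have := hs1 i; have := hs0 j; linarith
  have hposlt : ∀ j, pos j < n := by
    intro j
    simp only [hposdef]
    split_ifs with h
    · omega
    · have := j.isLt; have := i.isLt; omega
  have hposadd : ∀ j, ((i:ℕ) + pos j) % n = (j:ℕ) := by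
    intro j
    simp only [hposdef]
    split_ifs with h
    · have : (i:ℕ) + ((j:ℕ) - (i:ℕ)) = (j:ℕ) := by omega
      rw [this, Nat.mod_eq_of_lt j.isLt]
    · have hi := i.isLt
      have : (i:ℕ) + ((j:ℕ) + (n - (i:ℕ))) = (j:ℕ) + n := by omega
      rw [this, Nat.add_mod_right, Nat.mod_eq_of_lt j.isLt]
  have hcancel : ∀ p q : ℕ, p < n → q < n →
      ((i:ℕ) + p) % n = ((i:ℕ) + q) % n → p = q := by
    intro p q hp hq h
    have h1 : (↑i + p) % n % n = (↑i + q) % n % n := by rw [h]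
    have : p % n = q % n := Nat.ModEq.add_left_cancel' (i:ℕ) h
    rwa [Nat.mod_eq_of_lt hp, Nat.mod_eq_of_lt hq] at this
  have hposinj : ∀ j k : Fin n, pos j = pos k → j = k := by
    intro j k h
    have h1 := hposadd j
    have h2 := hposadd k
    rw [h] at h1
    exact Fin.ext (h1 ▸ h2 ▸ rfl)
  have hposi : pos i = 0 := by simp [hposdef]
  -- strict monotonicity of D along pos
  have hmonoD : ∀ j k : Fin n, pos j < pos k → D j < D k := by
    intro j k h
    simp only [hposdef, hDdef] at h ⊢
    split_ifs at h ⊢ with h1 h2 h2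
    · have : (j:ℕ) < (k:ℕ) := by omega
      have := hsval j k this; linarith
    · have := hs1 j; have := hs0 k; linarith
    · exfalso; have := j.isLt; have := k.isLt; omega
    · have : (j:ℕ) < (k:ℕ) := by omega
      have := hsval j k this; linarith
  have hmonoD' : ∀ j k : Fin n, pos j ≤ pos k → D j ≤ D k := by
    intro j k h
    rcases Nat.eq_or_lt_of_le h with h' | h'
    · rw [hposinj j k h']
    · exact le_of_lt (hmonoD j k h')
  have hmonoD'' : ∀ j k : Fin n, D j ≤ D k → pos j ≤ pos k := by
    intro j k h
    by_contra hc
    exact absurd h (not_le.mpr (hmonoD k j (Nat.lt_of_not_le hc)))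
  -- D j = s j - s i + c for an integer c ∈ {0, 1}
  have hDc : ∀ j : Fin n, ∃ c : ℤ, D j = s j - s i + (c:ℝ) ∧ 0 ≤ c ∧ c ≤ 1 := by
    intro j
    simp only [hDdef]
    split_ifs
    · exact ⟨0, by norm_num⟩
    · exact ⟨1, by norm_num⟩
  -- intersection characterization
  have hint : ∀ j : Fin n, (A i ∩ A j).Nonempty ↔ (D j ≤ l i ∨ 1 - D j ≤ l j) := by
    intro j
    obtain ⟨c, hc, hc0, hc1⟩ := hDc j
    constructor
    · rintro ⟨x, hxi, hxj⟩
      rw [hA i] at hxi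
      obtain ⟨t, ht0, ht1, hx⟩ := hxi
      have hx' : x = ((s i + t : ℝ) : AddCircle (1:ℝ)) := by rw [hx]; rfl
      rw [hx'] at hxj
      obtain ⟨t', ht0', ht1', m, hm⟩ := (hmemA j (s i + t)).mp hxj
      have hli := hl i
      have hlj := hl j
      refine (key_interval (D j) (l i) (l j) (hDnn j) (hDlt j)
        hli.1 hli.2 hlj.1 hlj.2).mp ⟨m - c, ?_, ?_⟩
      · push_cast; nlinarith [hm, hc, ht0, ht1']
      · push_cast; nlinarith [hm, hc, ht0', ht1]
    · rintro (h | h)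
      · refine ⟨((s j : ℝ) : AddCircle (1:ℝ)), ?_, ?_⟩
        · refine (hmemA i (s j)).mpr ⟨D j, hDnn j, h, -c, ?_⟩
          push_cast; linarith [hc]
        · refine (hmemA j (s j)).mpr ⟨0, le_refl 0, le_of_lt (hl j).1, 0, by push_cast; ring⟩
      · refine ⟨((s i : ℝ) : AddCircle (1:ℝ)), ?_, ?_⟩
        · refine (hmemA i (s i)).mpr ⟨0, le_refl 0, le_of_lt (hl i).1, 0, by push_cast; ring⟩
        · refine (hmemA j (s i)).mpr ⟨1 - D j, by linarith [hDlt j], h, c - 1, ?_⟩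
          push_cast; linarith [hc]
  -- the characterization of the whole condition
  have hP : ∀ j : Fin n, (i = j ∨ (A i ∩ A j).Nonempty) ↔
      (D j ≤ l i ∨ ((j ≠ i) ∧ 1 - D j ≤ l j)) := by
    intro j
    by_cases hij : j = i
    · subst hij
      constructor
      · intro _
        left
        rw [hDi]
        linarith [(hl j).1]
      · intro _
        exact Or.inl rfl
    · rw [hint j]
      constructor
      · rintro (h | h | h)
        · exact absurd h.symm hij
        · exact Or.inl h
        · exact Or.inr ⟨hij, h⟩
      · rintro (h | ⟨_, h⟩)
        · exact Or.inr (Or.inl h)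
        · exact Or.inr (Or.inr h)
  -- closure of the backward set (uses properness)
  have hclose : ∀ j k : Fin n, j ≠ i → 1 - D j ≤ l j → D j ≤ D k → 1 - D k ≤ l k := by
    intro j k hj hlj hjk
    by_cases hkj : k = j
    · subst hkj; exact hlj
    by_contra hcon
    push_neg at hcon
    refine hproper k j hkj ?_
    intro x hx
    rw [hA k] at hx
    obtain ⟨t, ht0, ht1, hx⟩ := hx
    have hx' : x = ((s k + t : ℝ) : AddCircle (1:ℝ)) := by rw [hx]; rfl
    rw [hx']
    obtain ⟨c, hc, _, _⟩ := hDc j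
    obtain ⟨c', hc', _, _⟩ := hDc k
    refine (hmemA j (s k + t)).mpr ⟨(D k - D j) + t, by linarith, ?_, c - c', ?_⟩
    · have hDk1 := hDlt k
      have : D k - D j + t ≤ D k - D j + l k := by linarith
      linarith
    · push_cast; linarith [hc, hc']
  -- Finset machinery
  set F : Finset (Fin n) := Finset.univ.filter (fun j => D j ≤ l i) with hFdef
  set B : Finset (Fin n) := Finset.univ.filter (fun j => j ≠ i ∧ 1 - D j ≤ l j) with hBdef
  set f : ℕ := F.card with hfdef
  set b : ℕ := B.card with hbdef
  have hposinj' : Set.InjOn pos ↑F := fun x _ y _ h => hposinj x y h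
  have hposinjB : Set.InjOn pos ↑B := fun x _ y _ h => hposinj x y h
  have hpossurj : ∀ q, q < n → ∃ k : Fin n, pos k = q := by
    intro q hq
    refine ⟨⟨((i:ℕ) + q) % n, Nat.mod_lt _ hn⟩, ?_⟩
    refine hcancel _ _ (hposlt _) hq ?_
    rw [hposadd]
  -- forward set is an initial segment
  have hF : ∀ j : Fin n, D j ≤ l i ↔ pos j < f := by
    have hdown : ∀ p ∈ F.image pos, ∀ q, q ≤ p → q ∈ F.image pos := by
      intro p hp q hq
      obtain ⟨j, hjF, hjp⟩ := Finset.mem_image.mp hp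
      obtain ⟨k, hk⟩ := hpossurj q (lt_of_le_of_lt hq (hjp ▸ hposlt j))
      refine Finset.mem_image.mpr ⟨k, ?_, hk⟩
      rw [hFdef, Finset.mem_filter]
      refine ⟨Finset.mem_univ _, ?_⟩
      have : D k ≤ D j := hmonoD' k j (by omega)
      have hjli : D j ≤ l i := (Finset.mem_filter.mp hjF).2
      linarith
    have hcard : (F.image pos).card = f := Finset.card_image_of_injOn hposinj'
    have hrange : F.image pos = Finset.range f := hcard ▸ downClosed_eq_range _ hdown
    intro j
    constructor
    · intro h
      have : pos j ∈ F.image pos := Finset.mem_image.mpr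
        ⟨j, Finset.mem_filter.mpr ⟨Finset.mem_univ _, h⟩, rfl⟩
      rw [hrange] at this
      exact Finset.mem_range.mp this
    · intro h
      have : pos j ∈ F.image pos := by rw [hrange]; exact Finset.mem_range.mpr h
      obtain ⟨k, hkF, hk⟩ := Finset.mem_image.mp this
      have := hposinj k j hk
      subst this
      exact (Finset.mem_filter.mp hkF).2
  -- backward set is a final segment
  have hB : ∀ j : Fin n, (j ≠ i ∧ 1 - D j ≤ l j) ↔ n - b ≤ pos j := by
    have hBsub : B.image pos ⊆ Finset.range n := by
      intro p hp
      obtain ⟨j, _, hjp⟩ := Finset.mem_image.mp hp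
      exact Finset.mem_range.mpr (hjp ▸ hposlt j)
    have hdown : ∀ p ∈ Finset.range n \ B.image pos, ∀ q, q ≤ p →
        q ∈ Finset.range n \ B.image pos := by
      intro p hp q hq
      rw [Finset.mem_sdiff] at hp ⊢
      obtain ⟨hp1, hp2⟩ := hp
      have hpn := Finset.mem_range.mp hp1
      refine ⟨Finset.mem_range.mpr (lt_of_le_of_lt hq hpn), ?_⟩
      intro hqB
      obtain ⟨j, hjB, hjq⟩ := Finset.mem_image.mp hqB
      obtain ⟨k, hk⟩ := hpossurj p hpn
      rw [Finset.mem_filter] at hjB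
      obtain ⟨_, hji, hjl⟩ := hjB
      have hDjk : D j ≤ D k := hmonoD' j k (by omega)
      have hki : k ≠ i := by
        intro hki
        have : D j ≤ 0 := by rw [← hDi, ← hki]; exact hDjk
        exact absurd this (not_le.mpr (hDpos j hji))
      have hkB : k ∈ B := Finset.mem_filter.mpr
        ⟨Finset.mem_univ _, hki, hclose j k hji hjl hDjk⟩
      exact hp2 (Finset.mem_image.mpr ⟨k, hkB, hk⟩)
    have hcardB : (B.image pos).card = b := Finset.card_image_of_injOn hposinjB
    have hcardw : (Finset.range n \ B.image pos).card = n - b := by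
      rw [Finset.card_sdiff_of_subset hBsub, Finset.card_range, hcardB]
    have hrange : Finset.range n \ B.image pos = Finset.range (n - b) :=
      hcardw ▸ downClosed_eq_range _ hdown
    intro j
    constructor
    · intro h
      have hmem : pos j ∈ B.image pos := Finset.mem_image.mpr
        ⟨j, Finset.mem_filter.mpr ⟨Finset.mem_univ _, h⟩, rfl⟩
      by_contra hc
      push_neg at hc
      have : pos j ∈ Finset.range n \ B.image pos := by
        rw [hrange]; exact Finset.mem_range.mpr hc
      exact (Finset.mem_sdiff.mp this).2 hmem
    · intro h
      have hnot : pos j ∉ Finset.range n \ B.image pos := by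
        rw [hrange]; intro hc; have := Finset.mem_range.mp hc; omega
      have : pos j ∈ B.image pos := by
        by_contra hc
        exact hnot (Finset.mem_sdiff.mpr ⟨Finset.mem_range.mpr (hposlt j), hc⟩)
      obtain ⟨k, hkB, hk⟩ := Finset.mem_image.mp this
      have := hposinj k j hk
      subst this
      exact (Finset.mem_filter.mp hkB).2
  have hble : b ≤ n := by
    calc b = B.card := rfl
    _ ≤ Finset.univ.card := Finset.card_le_univ B
    _ = n := by simp
  -- put it together
  by_cases hbf : b + f ≤ n
  · refine ⟨((i:ℕ) + (n - b)) % n, b + f, ?_⟩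
    intro j
    rw [hP j, hF j, hB j]
    constructor
    · rintro (h | h)
      · refine ⟨b + pos j, by omega, ?_⟩
        have e : (((i:ℕ) + (n - b)) % n + (b + pos j)) % n = (j:ℕ) := by
          rw [Nat.mod_add_mod]
          have h2 : (i:ℕ) + (n - b) + (b + pos j) = ((i:ℕ) + pos j) + n := by omega
          rw [h2, Nat.add_mod_right, hposadd j]
        exact e.symm
      · refine ⟨pos j - (n - b), by have := hposlt j; omega, ?_⟩
        have e : (((i:ℕ) + (n - b)) % n + (pos j - (n - b))) % n = (j:ℕ) := by
          rw [Nat.mod_add_mod]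
          have h2 : (i:ℕ) + (n - b) + (pos j - (n - b)) = (i:ℕ) + pos j := by omega
          rw [h2, hposadd j]
        exact e.symm
    · rintro ⟨k, hk, hjk⟩
      have hpj : pos j = (n - b + k) % n := by
        refine hcancel _ _ (hposlt j) (Nat.mod_lt _ hn) ?_
        rw [hposadd j, Nat.add_mod_mod]
        rw [Nat.mod_add_mod] at hjk
        rw [← Nat.add_assoc]
        exact hjk
      by_cases hkb : k < b
      · right
        have e : n - b + k < n := by omega
        rw [hpj, Nat.mod_eq_of_lt e]
        omega
      · left
        have e : n - b + k = (k - b) + n := by omega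
        rw [hpj, e, Nat.add_mod_right, Nat.mod_eq_of_lt (by omega : k - b < n)]
        omega
  · refine ⟨0, n, ?_⟩
    intro j
    constructor
    · intro _
      exact ⟨(j:ℕ), j.isLt, by rw [Nat.zero_add, Nat.mod_eq_of_lt j.isLt]⟩
    · intro _
      rw [hP j, hF j, hB j]
      have := hposlt j
      omega
end
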